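/- arXiv:2501.13329 — 4 statements merged into one kernel-verified Lean document; each statement's English description precedes it below -/
import Mathlib

section
/- (Theorem 1, expected trajectory error.) Let Θ : ℝ^d → ℝ^{d×p} be a continuous matrix-valued function with ℓ²-operator norm ‖Θ(z)‖₂ ≤ K for all z ∈ ℝ^d. Let A ∈ ℝ^{n×p} be a design matrix whose Gram matrix AᵀA has smallest eigenvalue at least c·n for some c > 0, let ε be a square-integrable random vector in ℝⁿ with mean zero and E[ε εᵀ] = s²·Iₙ, and let ξ̂ = (AᵀA)⁻¹Aᵀ(Aξ* + ε) be the least-squares estimator of ξ* ∈ ℝ^p. Let x : [0,T] → ℝ^d solve x′(t) = Θ(x(t))ξ* with x(0) = x₀, and for each sample point ω let x̂_ω : [0,T] → ℝ^d solve x̂_ω′(t) = Θ(x̂_ω(t))ξ̂(ω) with x̂_ω(0) = x₀, where almost surely the vector field z ↦ Θ(z)ξ̂(ω) is Lipschitz with constant L > 0 and ω ↦ x̂_ω(T) is measurable. Then E[‖x(T) − x̂(T)‖] ≤ (K/L)·(e^{LT} − 1)·s·√(p/(c·n)). -/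
/-!
Along each sample path the two vector fields z ↦ Θ(z)ξ* and z ↦ Θ(z)ξ̂ differ uniformly by at most
K‖ξ̂ − ξ*‖, and the second one is L-Lipschitz, so Gronwall's inequality gives
‖x(T) − x̂(T)‖ ≤ (K/L)(e^{LT} − 1)‖ξ̂ − ξ*‖. The least-squares error is ξ̂ − ξ* = Mε with
M = (AᵀA)⁻¹Aᵀ, and isotropy of the noise gives E‖Mε‖² = s² tr(MMᵀ) = s² tr((AᵀA)⁻¹) ≤ s² p/(cn),
because the eigenvalues of (AᵀA)⁻¹ are at most 1/(cn). Jensen's inequality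
E‖Mε‖ ≤ √(E‖Mε‖²) concludes.
-/

open MeasureTheory Matrix ProbabilityTheory NNReal

lemma Matrix.IsHermitian.trace_inv_le {ι : Type*} [Fintype ι] [DecidableEq ι]
    {G : Matrix ι ι ℝ} (hG : G.IsHermitian) {b : ℝ} (hb : 0 < b)
    (heig : ∀ i, b ≤ hG.eigenvalues i) :
    G⁻¹.trace ≤ Fintype.card ι / b := by
  have hspec : ∀ x ∈ spectrum ℝ G, id x ≠ 0 := by
    rw [hG.spectrum_real_eq_range_eigenvalues]
    rintro _ ⟨i, rfl⟩
    exact (hb.trans_le (heig i)).ne'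
  have hinv : G⁻¹ = cfc (fun x : ℝ => (id x)⁻¹) G := by
    rw [cfc_inv id G hspec, cfc_id ℝ G, nonsing_inv_eq_ringInverse]
  rw [hinv, hG.cfc_eq, IsHermitian.cfc, Unitary.conjStarAlgAut_apply, trace_mul_cycle,
    Unitary.coe_star_mul_self, Matrix.one_mul, trace_diagonal]
  calc ∑ i, (hG.eigenvalues i)⁻¹ ≤ ∑ _i : ι, b⁻¹ :=
        Finset.sum_le_sum fun i _ => inv_anti₀ hb (heig i)
    _ = Fintype.card ι / b := by simp [div_eq_mul_inv]

section LeastSquares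

variable {m k : Type*} [Fintype m] [Fintype k] [DecidableEq k] {A : Matrix m k ℝ}

lemma leastSquares_mulVec_add_sub (hA : IsUnit (Aᵀ * A).det) (ξ : k → ℝ) (η : m → ℝ) :
    ((Aᵀ * A)⁻¹ * Aᵀ) *ᵥ (A *ᵥ ξ + η) - ξ = ((Aᵀ * A)⁻¹ * Aᵀ) *ᵥ η := by
  rw [mulVec_add, mulVec_mulVec, Matrix.mul_assoc, nonsing_inv_mul _ hA, one_mulVec,
    add_sub_cancel_left]

lemma leastSquares_mul_transpose (hA : IsUnit (Aᵀ * A).det) :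
    (Aᵀ * A)⁻¹ * Aᵀ * ((Aᵀ * A)⁻¹ * Aᵀ)ᵀ = (Aᵀ * A)⁻¹ := by
  have hsymm : (Aᵀ * A)ᵀ = Aᵀ * A := by rw [transpose_mul, transpose_transpose]
  rw [transpose_mul, transpose_transpose, transpose_nonsing_inv, hsymm, Matrix.mul_assoc,
    ← Matrix.mul_assoc Aᵀ, mul_nonsing_inv _ hA, Matrix.mul_one]

end LeastSquares

section IsotropicNoise

variable {Ω ι κ : Type*} [MeasurableSpace Ω] {μ : Measure Ω} [Fintype ι] [Fintype κ]
  {ε : Ω → ι → ℝ} {s : ℝ}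

lemma memLp_dotProduct (hε : ∀ i, MemLp (fun ω => ε ω i) 2 μ) (u : ι → ℝ) :
    MemLp (fun ω => u ⬝ᵥ ε ω) 2 μ :=
  memLp_finsetSum _ fun i _ => (hε i).const_mul (u i)

lemma memLp_norm_mulVec (hε : ∀ i, MemLp (fun ω => ε ω i) 2 μ) (M : Matrix κ ι ℝ) :
    MemLp (fun ω => ‖WithLp.toLp 2 (M *ᵥ ε ω)‖) 2 μ :=
  (MemLp.of_eval_piLp fun k => memLp_dotProduct hε (M k)).norm

lemma integral_dotProduct_sq [DecidableEq ι] (hε : ∀ i, MemLp (fun ω => ε ω i) 2 μ)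
    (hcov : ∀ i j, ∫ ω, ε ω i * ε ω j ∂μ = if i = j then s ^ 2 else 0) (u : ι → ℝ) :
    ∫ ω, (u ⬝ᵥ ε ω) ^ 2 ∂μ = s ^ 2 * (u ⬝ᵥ u) := by
  have hint : ∀ i j, Integrable (fun ω => u i * u j * (ε ω i * ε ω j)) μ := fun i j =>
    ((hε i).integrable_mul (hε j)).const_mul _
  have hexpand : ∀ ω, (u ⬝ᵥ ε ω) ^ 2 = ∑ i, ∑ j, u i * u j * (ε ω i * ε ω j) := by
    intro ω
    simp only [dotProduct, sq, Finset.sum_mul_sum]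
    exact Finset.sum_congr rfl fun i _ => Finset.sum_congr rfl fun j _ => by ring
  simp_rw [hexpand]
  rw [integral_finsetSum _ fun i _ => integrable_finsetSum _ fun j _ => hint i j]
  simp_rw [integral_finsetSum _ fun j _ => hint _ j, integral_const_mul, hcov]
  simp only [mul_ite, mul_zero, Finset.sum_ite_eq, Finset.mem_univ, if_true, dotProduct,
    Finset.mul_sum]
  exact Finset.sum_congr rfl fun i _ => by ring

lemma integral_norm_sq_mulVec [DecidableEq ι] (hε : ∀ i, MemLp (fun ω => ε ω i) 2 μ)
    (hcov : ∀ i j, ∫ ω, ε ω i * ε ω j ∂μ = if i = j then s ^ 2 else 0) (M : Matrix κ ι ℝ) :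
    ∫ ω, ‖WithLp.toLp 2 (M *ᵥ ε ω)‖ ^ 2 ∂μ = s ^ 2 * (M * Mᵀ).trace := by
  simp only [EuclideanSpace.norm_sq_eq, Real.norm_eq_abs, sq_abs]
  change ∫ ω, ∑ k, (M k ⬝ᵥ ε ω) ^ 2 ∂μ = _
  rw [integral_finsetSum _ fun k _ => (memLp_dotProduct hε (M k)).integrable_sq]
  simp only [integral_dotProduct_sq hε hcov, ← Finset.mul_sum]
  rfl

lemma integral_le_sqrt_integral_sq [IsProbabilityMeasure μ] {X : Ω → ℝ} (hX : MemLp X 2 μ) :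
    ∫ ω, X ω ∂μ ≤ √(∫ ω, X ω ^ 2 ∂μ) := by
  have hvar := variance_nonneg X μ
  rw [variance_eq_sub hX] at hvar
  exact (le_abs_self _).trans (Real.abs_le_sqrt (by simpa [Pi.pow_apply] using hvar))

lemma integral_norm_mulVec_le [IsProbabilityMeasure μ] [DecidableEq ι]
    (hε : ∀ i, MemLp (fun ω => ε ω i) 2 μ)
    (hcov : ∀ i j, ∫ ω, ε ω i * ε ω j ∂μ = if i = j then s ^ 2 else 0) (hs : 0 ≤ s)
    (M : Matrix κ ι ℝ) :
    ∫ ω, ‖WithLp.toLp 2 (M *ᵥ ε ω)‖ ∂μ ≤ s * √((M * Mᵀ).trace) := by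
  refine (integral_le_sqrt_integral_sq (memLp_norm_mulVec hε M)).trans_eq ?_
  rw [integral_norm_sq_mulVec hε hcov, Real.sqrt_mul (sq_nonneg s), Real.sqrt_sq hs]

end IsotropicNoise

lemma norm_sub_le_of_trajectories_ODE_of_norm_sub_le {E : Type*} [NormedAddCommGroup E]
    [NormedSpace ℝ E] {f g : E → E} {L : ℝ≥0} (hL : L ≠ 0) (hg : LipschitzWith L g)
    {δ : ℝ} (hfg : ∀ z, ‖f z - g z‖ ≤ δ) {x y : ℝ → E} {T : ℝ} (hT : 0 ≤ T)
    (hx : ∀ t ∈ Set.Icc 0 T, HasDerivAt x (f (x t)) t)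
    (hy : ∀ t ∈ Set.Icc 0 T, HasDerivAt y (g (y t)) t) (h0 : x 0 = y 0) :
    ‖x T - y T‖ ≤ δ / L * (Real.exp (L * T) - 1) := by
  have hcont : ∀ {z : ℝ → E} {h : E → E}, (∀ t ∈ Set.Icc 0 T, HasDerivAt z (h (z t)) t) →
      ContinuousOn z (Set.Icc 0 T) := fun hz t ht =>
    (hz t ht).continuousAt.continuousWithinAt
  have hderiv : ∀ {z : ℝ → E} {h : E → E}, (∀ t ∈ Set.Icc 0 T, HasDerivAt z (h (z t)) t) →
      ∀ t ∈ Set.Ico 0 T, HasDerivWithinAt z (h (z t)) (Set.Ici t) t := fun hz t ht =>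
    (hz t (Set.Ico_subset_Icc_self ht)).hasDerivWithinAt
  have hgron := dist_le_of_approx_trajectories_ODE (v := fun _ => g) (fun _ => hg) (hcont hx)
    (hderiv hx) (fun t _ => (dist_eq_norm _ _).trans_le (hfg (x t))) (hcont hy) (hderiv hy)
    (fun t _ => (dist_self _).le) (dist_le_zero.2 h0) T ⟨hT, le_rfl⟩
  rw [dist_eq_norm, gronwallBound_of_K_ne_0 (NNReal.coe_ne_zero.2 hL), add_zero,
    sub_zero] at hgron
  simpa only [zero_mul, zero_add] using hgron

namespace S4

theorem stmt_4_general {d p n : ℕ} (hn : 1 ≤ n) (hp : 1 ≤ p)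
    (Θ : EuclideanSpace ℝ (Fin d) → Matrix (Fin d) (Fin p) ℝ)
    (K : ℝ) (hK : ∀ (z : EuclideanSpace ℝ (Fin d)) (v : EuclideanSpace ℝ (Fin p)),
      ‖Matrix.toEuclideanLin (Θ z) v‖ ≤ K * ‖v‖)
    (A : Matrix (Fin n) (Fin p) ℝ) (hH : (Aᵀ * A).IsHermitian)
    (c : ℝ) (hc : 0 < c) (heig : ∀ i, c * n ≤ hH.eigenvalues i)
    {Ω : Type*} [MeasurableSpace Ω] (μ : Measure Ω) [IsProbabilityMeasure μ]
    (ε : Ω → Fin n → ℝ) (hL2 : ∀ i, MemLp (fun ω => ε ω i) 2 μ)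
    (s : ℝ) (hs : 0 < s)
    (hcov : ∀ i j, ∫ ω, ε ω i * ε ω j ∂μ = if i = j then s ^ 2 else 0)
    (ξstar : Fin p → ℝ) (ξhat : Ω → Fin p → ℝ)
    (hξhat : ∀ ω, ξhat ω = ((Aᵀ * A)⁻¹ * Aᵀ).mulVec (A.mulVec ξstar + ε ω))
    (L : ℝ) (hL : 0 < L) (T : ℝ) (hT : 0 ≤ T)
    (x0 : EuclideanSpace ℝ (Fin d)) (x : ℝ → EuclideanSpace ℝ (Fin d)) (hx0 : x 0 = x0)
    (hx : ∀ t ∈ Set.Icc (0:ℝ) T, HasDerivAt x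
      (Matrix.toEuclideanLin (Θ (x t)) ((EuclideanSpace.equiv (Fin p) ℝ).symm ξstar)) t)
    (xhat : Ω → ℝ → EuclideanSpace ℝ (Fin d)) (hxhat0 : ∀ ω, xhat ω 0 = x0)
    (hxhat : ∀ᵐ ω ∂μ,
      (∀ t ∈ Set.Icc (0:ℝ) T, HasDerivAt (xhat ω)
        (Matrix.toEuclideanLin (Θ (xhat ω t))
          ((EuclideanSpace.equiv (Fin p) ℝ).symm (ξhat ω))) t) ∧
      LipschitzWith L.toNNReal
        (fun z => Matrix.toEuclideanLin (Θ z) ((EuclideanSpace.equiv (Fin p) ℝ).symm (ξhat ω)))) :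
    ∫ ω, ‖x T - xhat ω T‖ ∂μ
      ≤ K / L * (Real.exp (L * T) - 1) * s * Real.sqrt (p / (c * n)) := by
  set M := (Aᵀ * A)⁻¹ * Aᵀ
  have hcn : 0 < c * n := mul_pos hc (by exact_mod_cast hn)
  have hdet : IsUnit (Aᵀ * A).det := (isUnit_iff_isUnit_det _).1
    (hH.posDef_iff_eigenvalues_pos.2 fun i => hcn.trans_le (heig i)).isUnit
  have hK0 : 0 ≤ K := by
    simpa using (norm_nonneg _).trans (hK x0 (EuclideanSpace.single ⟨0, hp⟩ 1))
  set C := K / L * (Real.exp (L * T) - 1)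
  have hC : 0 ≤ C := mul_nonneg (div_nonneg hK0 hL.le)
    (sub_nonneg.2 (Real.one_le_exp (mul_nonneg hL.le hT)))
  have hpath : ∀ᵐ ω ∂μ, ‖x T - xhat ω T‖ ≤ C * ‖WithLp.toLp 2 (M *ᵥ ε ω)‖ := by
    filter_upwards [hxhat] with ω ⟨hode, hlip⟩
    have hfield : ∀ z, ‖Matrix.toEuclideanLin (Θ z) (WithLp.toLp 2 ξstar) -
        Matrix.toEuclideanLin (Θ z) (WithLp.toLp 2 (ξhat ω))‖ ≤
          K * ‖WithLp.toLp 2 (M *ᵥ ε ω)‖ := by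
      intro z
      rw [← map_sub]
      refine (hK z _).trans_eq ?_
      rw [← WithLp.toLp_sub, ← norm_neg, ← WithLp.toLp_neg, neg_sub, hξhat,
        leastSquares_mulVec_add_sub hdet]
    have hgron := norm_sub_le_of_trajectories_ODE_of_norm_sub_le
      (Real.toNNReal_pos.2 hL).ne' hlip hfield hT hx hode (hx0.trans (hxhat0 ω).symm)
    rw [Real.coe_toNNReal _ hL.le] at hgron
    exact hgron.trans_eq (by ring)
  have hint := (memLp_norm_mulVec hL2 M).integrable one_le_two
  calc ∫ ω, ‖x T - xhat ω T‖ ∂μ ≤ ∫ ω, C * ‖WithLp.toLp 2 (M *ᵥ ε ω)‖ ∂μ :=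
        integral_mono_of_nonneg (.of_forall fun _ => norm_nonneg _) (hint.const_mul C) hpath
    _ = C * ∫ ω, ‖WithLp.toLp 2 (M *ᵥ ε ω)‖ ∂μ := integral_const_mul C _
    _ ≤ C * (s * √((M * Mᵀ).trace)) := by
        gcongr
        exact integral_norm_mulVec_le hL2 hcov hs.le M
    _ ≤ C * (s * √(p / (c * n))) := by
        rw [leastSquares_mul_transpose hdet]
        gcongr
        simpa using hH.trace_inv_le hcn heig
    _ = K / L * (Real.exp (L * T) - 1) * s * √(p / (c * n)) := by ring

theorem stmt_4 {d p n : ℕ} (hn : 1 ≤ n) (hp : 1 ≤ p)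
    (Θ : EuclideanSpace ℝ (Fin d) → Matrix (Fin d) (Fin p) ℝ) (hcont : Continuous Θ)
    (K : ℝ) (hK : ∀ (z : EuclideanSpace ℝ (Fin d)) (v : EuclideanSpace ℝ (Fin p)),
      ‖Matrix.toEuclideanLin (Θ z) v‖ ≤ K * ‖v‖)
    (A : Matrix (Fin n) (Fin p) ℝ) (hH : (Aᵀ * A).IsHermitian)
    (c : ℝ) (hc : 0 < c) (heig : ∀ i, c * n ≤ hH.eigenvalues i)
    {Ω : Type*} [MeasurableSpace Ω] (μ : Measure Ω) [IsProbabilityMeasure μ]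
    (ε : Ω → Fin n → ℝ) (hL2 : ∀ i, MemLp (fun ω => ε ω i) 2 μ)
    (hmean : ∀ i, ∫ ω, ε ω i ∂μ = 0)
    (s : ℝ) (hs : 0 < s)
    (hcov : ∀ i j, ∫ ω, ε ω i * ε ω j ∂μ = if i = j then s ^ 2 else 0)
    (ξstar : Fin p → ℝ) (ξhat : Ω → Fin p → ℝ)
    (hξhat : ∀ ω, ξhat ω = ((Aᵀ * A)⁻¹ * Aᵀ).mulVec (A.mulVec ξstar + ε ω))
    (L : ℝ) (hL : 0 < L) (T : ℝ) (hT : 0 ≤ T)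
    (x0 : EuclideanSpace ℝ (Fin d)) (x : ℝ → EuclideanSpace ℝ (Fin d)) (hx0 : x 0 = x0)
    (hx : ∀ t ∈ Set.Icc (0:ℝ) T, HasDerivAt x
      (Matrix.toEuclideanLin (Θ (x t)) ((EuclideanSpace.equiv (Fin p) ℝ).symm ξstar)) t)
    (xhat : Ω → ℝ → EuclideanSpace ℝ (Fin d)) (hxhat0 : ∀ ω, xhat ω 0 = x0)
    (hxhat : ∀ᵐ ω ∂μ,
      (∀ t ∈ Set.Icc (0:ℝ) T, HasDerivAt (xhat ω)
        (Matrix.toEuclideanLin (Θ (xhat ω t))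
          ((EuclideanSpace.equiv (Fin p) ℝ).symm (ξhat ω))) t) ∧
      LipschitzWith L.toNNReal
        (fun z => Matrix.toEuclideanLin (Θ z) ((EuclideanSpace.equiv (Fin p) ℝ).symm (ξhat ω))))
    (hmeas : Measurable (fun ω => xhat ω T)) :
    ∫ ω, ‖x T - xhat ω T‖ ∂μ
      ≤ K / L * (Real.exp (L * T) - 1) * s * Real.sqrt (p / (c * n)) :=
  stmt_4_general hn hp Θ K hK A hH c hc heig μ ε hL2 s hs hcov ξstar ξhat hξhat L hL T hT x0 x hx0
    hx xhat hxhat0 hxhat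

end S4
end

section
/- (Theorem 1, high-probability coefficient error.) There exists a universal constant C > 0 with the following property. Let Θ ∈ ℝ^{n×p} be a design matrix whose Gram matrix ΘᵀΘ has smallest eigenvalue at least c·n for some c > 0, and let ε be a random vector in ℝⁿ whose coordinates are independent centered Gaussians with variance s² > 0. Then for every δ ∈ (0, 1/2], the least-squares estimator ξ̂ = (ΘᵀΘ)⁻¹Θᵀ(Θξ* + ε) satisfies, with probability at least 1 − δ, ‖ξ̂ − ξ*‖₂ ≤ C·s·√(p·log(1/δ)/(c·n)). -/
open MeasureTheory Matrix ProbabilityTheory NNReal Real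
open scoped ENNReal

/-!
The error is `ξ̂ - ξ* = A ε` with `A = (ΘᵀΘ)⁻¹Θᵀ`, and `A Aᵀ = (ΘᵀΘ)⁻¹ ≤ (c n)⁻¹` by the eigenvalue
bound. Writing `exp (‖y‖² / 2) = 𝔼_g exp ⟪g, y⟫` for a standard Gaussian vector `g` and exchanging
the two expectations (Tonelli), `𝔼 exp (λ ‖A ε‖²)` with `λ = c n / (4 s²)` becomes
`𝔼_g exp (λ s² ‖Aᵀ g‖²) ≤ 𝔼_g exp (‖g‖² / 4) = √2 ^ p`. Chernoff's bound then gives the tail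
estimate with `C = 2 √2`.
-/

namespace Matrix

variable {ι κ : Type*} [Fintype ι] [Fintype κ]

theorem IsHermitian.mul_dotProduct_self_le [DecidableEq ι] {B : Matrix ι ι ℝ} {a : ℝ}
    (hB : B.IsHermitian) (ha : ∀ i, a ≤ hB.eigenvalues i) (x : ι → ℝ) :
    a * (x ⬝ᵥ x) ≤ x ⬝ᵥ (B *ᵥ x) := by
  have hpsd : (B - algebraMap ℝ _ a).PosSemidef := by
    refine posSemidef_iff_isHermitian_and_spectrum_nonneg.2 ⟨hB.sub (isHermitian_diagonal _), ?_⟩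
    rw [← spectrum.sub_singleton_eq, hB.spectrum_real_eq_range_eigenvalues]
    rintro _ ⟨_, ⟨i, rfl⟩, _, rfl, rfl⟩
    exact sub_nonneg.2 (ha i)
  have := hpsd.dotProduct_mulVec_nonneg x
  simp only [star_trivial, sub_mulVec, Algebra.algebraMap_eq_smul_one, smul_mulVec, one_mulVec,
    dotProduct_sub, dotProduct_smul, smul_eq_mul] at this
  linarith

theorem IsHermitian.dotProduct_inv_mulVec_le [DecidableEq ι] {B : Matrix ι ι ℝ} {a : ℝ}
    (hB : B.IsHermitian) (ha₀ : 0 < a) (ha : ∀ i, a ≤ hB.eigenvalues i) (g : ι → ℝ) :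
    g ⬝ᵥ (B⁻¹ *ᵥ g) ≤ g ⬝ᵥ g / a := by
  have hdet : IsUnit B.det :=
    (hB.posDef_iff_eigenvalues_pos.2 fun i => ha₀.trans_le (ha i)).det_pos.ne'.isUnit
  set w := B⁻¹ *ᵥ g
  have hw : a * (w ⬝ᵥ w) ≤ w ⬝ᵥ g := by
    simpa [w, mulVec_mulVec, mul_nonsing_inv _ hdet] using hB.mul_dotProduct_self_le ha w
  have hCS : (w ⬝ᵥ g) ^ 2 ≤ (w ⬝ᵥ w) * (g ⬝ᵥ g) := by
    simpa [dotProduct, pow_two] using Finset.sum_mul_sq_le_sq_mul_sq Finset.univ w g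
  have hgg : 0 ≤ g ⬝ᵥ g := dotProduct_self_star_nonneg g
  rw [dotProduct_comm, le_div_iff₀ ha₀]
  rcases le_or_gt (w ⬝ᵥ g) 0 with hwg | hwg
  · nlinarith
  · nlinarith [mul_le_mul_of_nonneg_right hw hgg]

theorem inv_mul_transpose_mulVec_mulVec_add [DecidableEq κ] (Θ : Matrix ι κ ℝ)
    (hΘ : IsUnit (Θᵀ * Θ).det) (ξ : κ → ℝ) (e : ι → ℝ) :
    ((Θᵀ * Θ)⁻¹ * Θᵀ) *ᵥ (Θ *ᵥ ξ + e) = ξ + ((Θᵀ * Θ)⁻¹ * Θᵀ) *ᵥ e := by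
  rw [mulVec_add, mulVec_mulVec, Matrix.mul_assoc, nonsing_inv_mul _ hΘ, one_mulVec]

theorem vecMul_inv_mul_transpose_dotProduct_self [DecidableEq κ] (Θ : Matrix ι κ ℝ)
    (hΘ : IsUnit (Θᵀ * Θ).det) (g : κ → ℝ) :
    (g ᵥ* ((Θᵀ * Θ)⁻¹ * Θᵀ)) ⬝ᵥ (g ᵥ* ((Θᵀ * Θ)⁻¹ * Θᵀ)) = g ⬝ᵥ ((Θᵀ * Θ)⁻¹ *ᵥ g) := by
  have hsymm : (Θᵀ * Θ)ᵀ = Θᵀ * Θ := by rw [transpose_mul, transpose_transpose]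
  have hgram : (Θᵀ * Θ)⁻¹ * Θᵀ * ((Θᵀ * Θ)⁻¹ * Θᵀ)ᵀ = (Θᵀ * Θ)⁻¹ := by
    rw [transpose_mul, transpose_nonsing_inv, hsymm, transpose_transpose, Matrix.mul_assoc,
      ← Matrix.mul_assoc Θᵀ, mul_nonsing_inv _ hΘ, Matrix.mul_one]
  rw [← dotProduct_mulVec, ← mulVec_transpose, mulVec_mulVec, hgram]

theorem sqrt_smul_dotProduct_sqrt_smul {t : ℝ} (ht : 0 ≤ t) (y : ι → ℝ) :
    (√t • y) ⬝ᵥ (√t • y) = t * (y ⬝ᵥ y) := by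
  rw [dotProduct_smul, smul_dotProduct, smul_eq_mul, smul_eq_mul, ← mul_assoc, mul_self_sqrt ht]

end Matrix

theorem EuclideanSpace.norm_equiv_symm {ι : Type*} [Fintype ι] (y : ι → ℝ) :
    ‖(EuclideanSpace.equiv ι ℝ).symm y‖ = √(y ⬝ᵥ y) := by
  rw [EuclideanSpace.norm_eq]
  simp [dotProduct, sq]

theorem sqrt_two_pow_le_mul_exp {k : ℕ} (hk : 1 ≤ k) {δ : ℝ} (hδ₀ : 0 < δ) (hδ : δ ≤ 1 / 2) :
    √2 ^ k ≤ δ * rexp (2 * (k * log (1 / δ))) := by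
  have hlog : log 2 ≤ log (1 / δ) := log_le_log two_pos (by rw [le_div_iff₀ hδ₀]; linarith)
  have hk' : (1 : ℝ) ≤ k := by exact_mod_cast hk
  calc √2 ^ k = rexp (k * (log 2 / 2)) := by
        rw [← exp_log (by positivity : 0 < √2 ^ k), log_pow, log_sqrt zero_le_two]
    _ ≤ rexp (-log (1 / δ) + 2 * (k * log (1 / δ))) := by
        have hlog2 := log_pos one_lt_two
        gcongr
        nlinarith [mul_le_mul_of_nonneg_left hlog (by positivity : (0 : ℝ) ≤ k)]
    _ = δ * rexp (2 * (k * log (1 / δ))) := by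
        rw [exp_add, one_div, log_inv, neg_neg, exp_log hδ₀]

theorem MeasureTheory.lintegral_pi_prod_eq_prod {ι : Type*} [Fintype ι] {E : ι → Type*}
    [∀ i, MeasurableSpace (E i)] (μ : ∀ i, Measure (E i)) [∀ i, IsProbabilityMeasure (μ i)]
    {f : ∀ i, E i → ℝ≥0∞} (hf : ∀ i, Measurable (f i)) :
    ∫⁻ x, ∏ i, f i (x i) ∂Measure.pi μ = ∏ i, ∫⁻ x, f i x ∂μ i := by
  rw [lintegral_prod_eq_prod_lintegral_of_indepFun _ _
    (iIndepFun_pi fun i => (hf i).aemeasurable) fun i => (hf i).comp (measurable_pi_apply i)]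
  exact Finset.prod_congr rfl fun i _ => (measurePreserving_eval μ i).lintegral_comp (hf i)

namespace ProbabilityTheory

theorem ofReal_one_sub_le_measure_le_of_lintegral_exp_le {E : Type*} [MeasurableSpace E]
    {ν : Measure E} [IsProbabilityMeasure ν] {F : E → ℝ} (hF : Measurable F) {K T δ : ℝ}
    (hδ : 0 ≤ δ) (hK : ∫⁻ x, ENNReal.ofReal (rexp (F x)) ∂ν ≤ ENNReal.ofReal K)
    (hKT : K ≤ δ * rexp T) :
    ENNReal.ofReal (1 - δ) ≤ ν {x | F x ≤ T} := by
  have htail : ν {x | T < F x} ≤ ENNReal.ofReal δ := calc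
    ν {x | T < F x} ≤ ν {x | ENNReal.ofReal (rexp T) ≤ ENNReal.ofReal (rexp (F x))} :=
      measure_mono fun x hx => ENNReal.ofReal_le_ofReal (exp_le_exp.2 hx.le)
    _ ≤ (∫⁻ x, ENNReal.ofReal (rexp (F x)) ∂ν) / ENNReal.ofReal (rexp T) :=
      meas_ge_le_lintegral_div (by fun_prop) (by simp [exp_pos]) ENNReal.ofReal_ne_top
    _ ≤ ENNReal.ofReal (K / rexp T) := by
      rw [ENNReal.ofReal_div_of_pos (exp_pos T)]; gcongr
    _ ≤ ENNReal.ofReal δ := ENNReal.ofReal_le_ofReal ((div_le_iff₀ (exp_pos T)).2 hKT)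
  have hcompl : {x | F x ≤ T} = {x | T < F x}ᶜ := by ext; simp
  rw [hcompl, prob_compl_eq_one_sub (measurableSet_lt measurable_const hF),
    ENNReal.ofReal_sub _ hδ, ENNReal.ofReal_one]
  gcongr

theorem lintegral_exp_mul_gaussianReal (m : ℝ) (v : ℝ≥0) (u : ℝ) :
    ∫⁻ x, ENNReal.ofReal (rexp (u * x)) ∂gaussianReal m v =
      ENNReal.ofReal (rexp (m * u + v * u ^ 2 / 2)) := by
  rw [← ofReal_integral_eq_lintegral_ofReal (integrable_exp_mul_gaussianReal u)
    (.of_forall fun _ => (exp_pos _).le), ← congrFun mgf_fun_id_gaussianReal u]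
  rfl

theorem gaussianPDFReal_mul_exp_sq_div_four (x : ℝ) :
    gaussianPDFReal 0 1 x * rexp (x ^ 2 / 4) = √2 * gaussianPDFReal 0 2 x := by
  have hsqrt : √(2 * π * (2 : ℝ≥0)) = √(2 * π * (1 : ℝ≥0)) * √2 := by
    rw [← Real.sqrt_mul (by positivity)]; norm_num
  have hexp : -x ^ 2 / (2 * ((1 : ℝ≥0) : ℝ)) + x ^ 2 / 4 = -x ^ 2 / (2 * ((2 : ℝ≥0) : ℝ)) := by
    push_cast; ring
  simp only [gaussianPDFReal_def, sub_zero, hsqrt, mul_inv]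
  rw [mul_assoc, ← exp_add, hexp]
  have h2 : √2 * (√2)⁻¹ = 1 := mul_inv_cancel₀ (by positivity)
  linear_combination (-(√(2 * π * (1 : ℝ≥0)))⁻¹ * rexp (-x ^ 2 / (2 * (2 : ℝ≥0)))) * h2

theorem lintegral_exp_sq_div_four_gaussianReal :
    ∫⁻ x, ENNReal.ofReal (rexp (x ^ 2 / 4)) ∂gaussianReal 0 1 = ENNReal.ofReal √2 := by
  rw [gaussianReal_of_var_ne_zero 0 one_ne_zero,
    lintegral_withDensity_eq_lintegral_mul _ (measurable_gaussianPDF 0 1) (by fun_prop)]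
  have hpdf (x : ℝ) : gaussianPDF 0 1 x * ENNReal.ofReal (rexp (x ^ 2 / 4)) =
      ENNReal.ofReal √2 * gaussianPDF 0 2 x := by
    rw [gaussianPDF, gaussianPDF, ← ENNReal.ofReal_mul (gaussianPDFReal_nonneg _ _ _),
      ← ENNReal.ofReal_mul (sqrt_nonneg _), gaussianPDFReal_mul_exp_sq_div_four]
  simp only [Pi.mul_apply, hpdf]
  rw [lintegral_const_mul _ (measurable_gaussianPDF _ _),
    lintegral_gaussianPDF_eq_one _ two_ne_zero, mul_one]

section GaussianVector

variable {ι κ : Type*} [Fintype ι] [Fintype κ]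

theorem lintegral_exp_dotProduct_pi_gaussianReal (v : ℝ≥0) (a : ι → ℝ) :
    ∫⁻ x, ENNReal.ofReal (rexp (a ⬝ᵥ x)) ∂Measure.pi (fun _ => gaussianReal 0 v) =
      ENNReal.ofReal (rexp (v * (a ⬝ᵥ a) / 2)) := by
  have hprod (b : ι → ℝ) : ENNReal.ofReal (rexp (∑ i, b i)) = ∏ i, ENNReal.ofReal (rexp (b i)) := by
    rw [exp_sum, ENNReal.ofReal_prod_of_nonneg fun i _ => (exp_pos _).le]
  simp only [dotProduct, hprod, Finset.mul_sum, Finset.sum_div]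
  rw [lintegral_pi_prod_eq_prod _ (f := fun i y => ENNReal.ofReal (rexp (a i * y))) (by fun_prop)]
  simp only [lintegral_exp_mul_gaussianReal]
  congr! 3
  ring

theorem lintegral_exp_dotProduct_self_div_four_pi_gaussianReal :
    ∫⁻ x, ENNReal.ofReal (rexp (x ⬝ᵥ x / 4)) ∂Measure.pi (fun _ : ι => gaussianReal 0 1) =
      ENNReal.ofReal √2 ^ Fintype.card ι := by
  have hprod (x : ι → ℝ) : ENNReal.ofReal (rexp (x ⬝ᵥ x / 4)) =
      ∏ i, ENNReal.ofReal (rexp (x i ^ 2 / 4)) := by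
    simp only [dotProduct, Finset.sum_div, ← sq]
    rw [exp_sum, ENNReal.ofReal_prod_of_nonneg fun i _ => (exp_pos _).le]
  simp only [hprod]
  rw [lintegral_pi_prod_eq_prod _ (f := fun _ y => ENNReal.ofReal (rexp (y ^ 2 / 4)))
    (by fun_prop)]
  simp [lintegral_exp_sq_div_four_gaussianReal]

theorem ofReal_exp_half_dotProduct_self_eq_lintegral (y : κ → ℝ) :
    ENNReal.ofReal (rexp (y ⬝ᵥ y / 2)) =
      ∫⁻ g, ENNReal.ofReal (rexp (g ⬝ᵥ y)) ∂Measure.pi (fun _ : κ => gaussianReal 0 1) := by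
  simp_rw [dotProduct_comm _ y, lintegral_exp_dotProduct_pi_gaussianReal, NNReal.coe_one, one_mul]

theorem lintegral_exp_half_sq_mulVec_pi_gaussianReal (v : ℝ≥0) (A : Matrix κ ι ℝ) :
    ∫⁻ x, ENNReal.ofReal (rexp ((A *ᵥ x) ⬝ᵥ (A *ᵥ x) / 2))
        ∂Measure.pi (fun _ => gaussianReal 0 v) =
      ∫⁻ g, ENNReal.ofReal (rexp (v * ((g ᵥ* A) ⬝ᵥ (g ᵥ* A)) / 2))
        ∂Measure.pi (fun _ => gaussianReal 0 1) := by
  simp_rw [ofReal_exp_half_dotProduct_self_eq_lintegral, dotProduct_mulVec]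
  rw [lintegral_lintegral_swap (by fun_prop)]
  simp_rw [lintegral_exp_dotProduct_pi_gaussianReal]

theorem lintegral_exp_half_sq_mulVec_le (v : ℝ≥0) {A : Matrix κ ι ℝ}
    (hA : ∀ g, v * ((g ᵥ* A) ⬝ᵥ (g ᵥ* A)) ≤ g ⬝ᵥ g / 2) :
    ∫⁻ x, ENNReal.ofReal (rexp ((A *ᵥ x) ⬝ᵥ (A *ᵥ x) / 2))
        ∂Measure.pi (fun _ => gaussianReal 0 v) ≤
      ENNReal.ofReal √2 ^ Fintype.card κ := by
  rw [lintegral_exp_half_sq_mulVec_pi_gaussianReal,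
    ← lintegral_exp_dotProduct_self_div_four_pi_gaussianReal]
  refine lintegral_mono fun g => ENNReal.ofReal_le_ofReal (exp_le_exp.2 ?_)
  linarith [hA g]

theorem ofReal_one_sub_le_pi_gaussianReal_dotProduct_mulVec_le [Nonempty κ] {v : ℝ≥0} (hv : v ≠ 0)
    {A : Matrix κ ι ℝ} {a : ℝ} (ha : 0 < a) (hA : ∀ g, (g ᵥ* A) ⬝ᵥ (g ᵥ* A) ≤ g ⬝ᵥ g / a)
    {δ : ℝ} (hδ₀ : 0 < δ) (hδ : δ ≤ 1 / 2) :
    ENNReal.ofReal (1 - δ) ≤ Measure.pi (fun _ => gaussianReal 0 v)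
      {x | (A *ᵥ x) ⬝ᵥ (A *ᵥ x) ≤ 8 * v * (Fintype.card κ * log (1 / δ)) / a} := by
  have hv₀ : (0 : ℝ) < v := NNReal.coe_pos.2 (pos_iff_ne_zero.2 hv)
  -- the scaling for which `v • (√t • A) (√t • A)ᵀ ≤ 1 / 2`
  set t := a / (2 * v) with ht_def
  have ht : 0 < t := by positivity
  have htA (g : κ → ℝ) : v * ((g ᵥ* (√t • A)) ⬝ᵥ (g ᵥ* (√t • A))) ≤ g ⬝ᵥ g / 2 := by
    calc v * ((g ᵥ* (√t • A)) ⬝ᵥ (g ᵥ* (√t • A))) = v * (t * ((g ᵥ* A) ⬝ᵥ (g ᵥ* A))) := by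
          rw [vecMul_smul, sqrt_smul_dotProduct_sqrt_smul ht.le]
      _ ≤ v * (t * (g ⬝ᵥ g / a)) := by gcongr; exact hA g
      _ = g ⬝ᵥ g / 2 := by rw [ht_def]; field_simp
  have hlevel : {x | (A *ᵥ x) ⬝ᵥ (A *ᵥ x) ≤ 8 * v * (Fintype.card κ * log (1 / δ)) / a} =
      {x | ((√t • A) *ᵥ x) ⬝ᵥ ((√t • A) *ᵥ x) / 2 ≤ 2 * (Fintype.card κ * log (1 / δ))} := by
    ext x
    rw [Set.mem_ofPred_eq, Set.mem_ofPred_eq, smul_mulVec, sqrt_smul_dotProduct_sqrt_smul ht.le,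
      le_div_iff₀ ha, ← div_le_div_iff_of_pos_right (by positivity : (0 : ℝ) < 4 * v), ht_def]
    field_simp
    ring_nf
  rw [hlevel]
  refine ofReal_one_sub_le_measure_le_of_lintegral_exp_le (by fun_prop) hδ₀.le
    ((lintegral_exp_half_sq_mulVec_le v htA).trans_eq ?_)
    (sqrt_two_pow_le_mul_exp Fintype.card_pos hδ₀ hδ)
  rw [ENNReal.ofReal_pow (sqrt_nonneg 2)]

theorem ofReal_one_sub_le_pi_gaussianReal_norm_mulVec_le [Nonempty κ] {v : ℝ≥0} (hv : v ≠ 0)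
    {A : Matrix κ ι ℝ} {a : ℝ} (ha : 0 < a) (hA : ∀ g, (g ᵥ* A) ⬝ᵥ (g ᵥ* A) ≤ g ⬝ᵥ g / a)
    {δ : ℝ} (hδ₀ : 0 < δ) (hδ : δ ≤ 1 / 2) :
    ENNReal.ofReal (1 - δ) ≤ Measure.pi (fun _ => gaussianReal 0 v)
      {x | ‖(EuclideanSpace.equiv κ ℝ).symm (A *ᵥ x)‖ ≤
        2 * √2 * √v * √(Fintype.card κ * log (1 / δ) / a)} := by
  have hR : √(8 * v * (Fintype.card κ * log (1 / δ)) / a) =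
      2 * √2 * √v * √(Fintype.card κ * log (1 / δ) / a) := by
    have h8 : (2 * √2) ^ 2 = 8 := by rw [mul_pow, sq_sqrt zero_le_two]; norm_num
    rw [← h8, mul_div_assoc, sqrt_mul (by positivity), sqrt_mul (by positivity),
      sqrt_sq (by positivity)]
  refine (ofReal_one_sub_le_pi_gaussianReal_dotProduct_mulVec_le hv ha hA hδ₀ hδ).trans
    (measure_mono fun x hx => ?_)
  rw [Set.mem_ofPred_eq, EuclideanSpace.norm_equiv_symm, ← hR]
  exact sqrt_le_sqrt hx

end GaussianVector

end ProbabilityTheory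

namespace S6

theorem stmt_6 :
    ∃ C : ℝ, 0 < C ∧
      ∀ (n p : ℕ), 1 ≤ n → 1 ≤ p →
      ∀ (Θ : Matrix (Fin n) (Fin p) ℝ) (hH : (Θᵀ * Θ).IsHermitian)
        (c : ℝ), 0 < c → (∀ i, c * n ≤ hH.eigenvalues i) →
      ∀ (Ω : Type) (_ : MeasurableSpace Ω) (μ : Measure Ω), IsProbabilityMeasure μ →
      ∀ (ε : Ω → Fin n → ℝ), (∀ i, Measurable fun ω => ε ω i) →
      ∀ (s : ℝ), 0 < s →
      iIndepFun (fun i ω => ε ω i) μ →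
      (∀ i, Measure.map (fun ω => ε ω i) μ = gaussianReal 0 (Real.toNNReal (s ^ 2))) →
      ∀ (ξstar : Fin p → ℝ) (ξhat : Ω → Fin p → ℝ),
      (∀ ω, ξhat ω = ((Θᵀ * Θ)⁻¹ * Θᵀ).mulVec (Θ.mulVec ξstar + ε ω)) →
      ∀ δ : ℝ, δ ∈ Set.Ioc (0:ℝ) (1/2) →
      ENNReal.ofReal (1 - δ) ≤
        μ {ω | ‖(EuclideanSpace.equiv (Fin p) ℝ).symm (ξhat ω - ξstar)‖
          ≤ C * s * Real.sqrt (p * Real.log (1 / δ) / (c * n))} := by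
  refine ⟨2 * √2, by positivity, ?_⟩
  intro n p hn hp Θ hH c hc hev Ω _ μ _ ε hε s hs hind hmap ξstar ξhat hξ δ ⟨hδ₀, hδ⟩
  have hcn : 0 < c * n := mul_pos hc (by exact_mod_cast hn)
  have hunit : IsUnit (Θᵀ * Θ).det :=
    (hH.posDef_iff_eigenvalues_pos.2 fun i => hcn.trans_le (hev i)).det_pos.ne'.isUnit
  have hgram (g : Fin p → ℝ) :
      (g ᵥ* ((Θᵀ * Θ)⁻¹ * Θᵀ)) ⬝ᵥ (g ᵥ* ((Θᵀ * Θ)⁻¹ * Θᵀ)) ≤ g ⬝ᵥ g / (c * n) :=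
    (Θ.vecMul_inv_mul_transpose_dotProduct_self hunit g).trans_le
      (hH.dotProduct_inv_mulVec_le hcn hev g)
  set V := (s ^ 2).toNNReal
  have hV : V ≠ 0 := by simpa [V] using hs.ne'
  have hsV : √(V : ℝ) = s := by rw [Real.coe_toNNReal _ (sq_nonneg s), sqrt_sq hs.le]
  have hlaw : μ.map ε = Measure.pi fun _ => gaussianReal 0 V := by
    rw [(iIndepFun_iff_map_fun_eq_pi_map fun i => (hε i).aemeasurable).1 hind]
    simp_rw [hmap]
  have : Nonempty (Fin p) := ⟨⟨0, hp⟩⟩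
  convert (ofReal_one_sub_le_pi_gaussianReal_norm_mulVec_le hV hcn hgram hδ₀ hδ).trans_eq
    (hlaw ▸ Measure.map_apply (measurable_pi_lambda _ hε)
      (measurableSet_le (by fun_prop) measurable_const)) using 3
  ext ω
  rw [Set.mem_preimage, Set.mem_ofPred_eq, Set.mem_ofPred_eq, hξ ω,
    Θ.inv_mul_transpose_mulVec_mulVec_add hunit, add_sub_cancel_left, hsV, Fintype.card_fin]

end S6
end

section
/- (Theorem 1, high-probability trajectory error.) There exists a universal constant C > 0 with the following property. Let Θ : ℝ^d → ℝ^{d×p} be continuous with ℓ²-operator norm ‖Θ(z)‖₂ ≤ K for all z, let A ∈ ℝ^{n×p} have Gram matrix AᵀA with smallest eigenvalue at least c·n (c > 0), and let ε be a random vector in ℝⁿ with independent centered Gaussian coordinates of variance s² > 0. Let ξ̂ = (AᵀA)⁻¹Aᵀ(Aξ* + ε), let x : [0,T] → ℝ^d solve x′(t) = Θ(x(t))ξ* with x(0) = x₀, and for each sample point ω let x̂_ω : [0,T] → ℝ^d solve x̂_ω′(t) = Θ(x̂_ω(t))ξ̂(ω) with x̂_ω(0) = x₀, where almost surely the vector field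 z ↦ Θ(z)ξ̂(ω) is Lipschitz with constant L > 0. Then for every δ ∈ (0, 1/2], with probability at least 1 − δ, ‖x(T) − x̂(T)‖ ≤ C·(K/L)·(e^{LT} − 1)·s·√(p·log(1/δ)/(c·n)). -/
/-!
Grönwall's inequality, applied to the exact and the estimated SINDy vector fields (which differ by
at most `K ‖ξ* - ξ̂‖` pointwise), reduces the trajectory error to the estimation error
`‖ξ̂ - ξ*‖ = ‖(AᵀA)⁻¹Aᵀ ε‖`. Each coordinate of `(AᵀA)⁻¹Aᵀ ε` is a weighted sum of the independent
Gaussian noises with squared weights summing to `((AᵀA)⁻¹)ⱼⱼ ≤ 1/(cn)`, hence is sub-Gaussian with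
variance proxy `V = s²/(cn)`, and so satisfies `𝔼 exp(X²/(4V)) ≤ 3`. By convexity of `exp` the same
bound holds for `exp(‖X‖²/(4Vp))`, and Markov's inequality gives
`ℙ(‖X‖² ≥ 16 V p log(1/δ)) ≤ 3δ⁴ ≤ δ`.
-/

open MeasureTheory Matrix ProbabilityTheory NNReal

section LeastSquares

theorem Matrix.IsHermitian.posSemidef_sub_smul_one {n : Type*} [Fintype n] [DecidableEq n]
    {B : Matrix n n ℝ} (hB : B.IsHermitian) {β : ℝ} (hβ : ∀ i, β ≤ hB.eigenvalues i) :
    (B - β • 1).PosSemidef := by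
  have h : B - β • 1 = Unitary.conjStarAlgAut ℝ _ hB.eigenvectorUnitary
      (diagonal fun i => hB.eigenvalues i - β) := by
    rw [← diagonal_sub, ← smul_one_eq_diagonal, map_sub, map_smul, map_one]
    conv_lhs => rw [hB.spectral_theorem]
    rfl
  rw [h, Unitary.conjStarAlgAut_apply,
    Unitary.isUnit_coe.posSemidef_star_right_conjugate_iff, posSemidef_diagonal_iff]
  simpa using hβ

theorem Matrix.IsHermitian.mul_dotProduct_le {n : Type*} [Fintype n] [DecidableEq n]
    {B : Matrix n n ℝ} (hB : B.IsHermitian) {β : ℝ} (hβ : ∀ i, β ≤ hB.eigenvalues i)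
    (w : n → ℝ) :
    β * (w ⬝ᵥ w) ≤ w ⬝ᵥ (B *ᵥ w) := by
  have := (hB.posSemidef_sub_smul_one hβ).dotProduct_mulVec_nonneg w
  simp only [star_trivial, sub_mulVec, smul_mulVec, one_mulVec, dotProduct_sub,
    dotProduct_smul, smul_eq_mul] at this
  linarith

theorem Matrix.IsHermitian.isUnit_det_of_le_eigenvalues {n : Type*} [Fintype n] [DecidableEq n]
    {B : Matrix n n ℝ} (hB : B.IsHermitian) {β : ℝ} (hβ : 0 < β)
    (hev : ∀ i, β ≤ hB.eigenvalues i) : IsUnit B.det :=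
  (isUnit_iff_isUnit_det B).1 (hB.posDef_iff_eigenvalues_pos.2 fun i => hβ.trans_le (hev i)).isUnit

theorem leastSquares_sub_eq {R m n : Type*} [CommRing R] [Fintype m] [Fintype n]
    [DecidableEq n] {A : Matrix m n R} (hA : IsUnit (Aᵀ * A).det) (ξ : n → R) (e : m → R) :
    ((Aᵀ * A)⁻¹ * Aᵀ) *ᵥ (A *ᵥ ξ + e) - ξ = ((Aᵀ * A)⁻¹ * Aᵀ) *ᵥ e := by
  rw [mulVec_add, mulVec_mulVec, Matrix.mul_assoc, nonsing_inv_mul _ hA, one_mulVec,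
    add_sub_cancel_left]

/-- With `w = (AᵀA)⁻¹ eⱼ`, the row is `A w`, whose squared norm is `wᵀ(AᵀA)w = wⱼ`; and
`β wⱼ² ≤ β ‖w‖² ≤ wᵀ(AᵀA)w = wⱼ`. -/
theorem sum_sq_leastSquares_row_le {m n : Type*} [Fintype m] [Fintype n] [DecidableEq n]
    (A : Matrix m n ℝ) (hH : (Aᵀ * A).IsHermitian) {β : ℝ} (hβ : 0 < β)
    (hev : ∀ i, β ≤ hH.eigenvalues i) (j : n) :
    ∑ i, ((Aᵀ * A)⁻¹ * Aᵀ) j i ^ 2 ≤ β⁻¹ := by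
  set w := Pi.single j 1 ᵥ* (Aᵀ * A)⁻¹
  have hrow : ∀ i, ((Aᵀ * A)⁻¹ * Aᵀ) j i = (A *ᵥ w) i := fun i => by
    rw [← vecMul_transpose, vecMul_vecMul, single_one_vecMul]
    rfl
  have hwB : w ᵥ* (Aᵀ * A) = Pi.single j 1 := by
    rw [vecMul_vecMul, nonsing_inv_mul _ (hH.isUnit_det_of_le_eigenvalues hβ hev), vecMul_one]
  have hquad : w ⬝ᵥ ((Aᵀ * A) *ᵥ w) = w j := by
    rw [dotProduct_mulVec, hwB, single_one_dotProduct]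
  have hsum : ∑ i, ((Aᵀ * A)⁻¹ * Aᵀ) j i ^ 2 = w j := calc
    _ = (A *ᵥ w) ⬝ᵥ (A *ᵥ w) := by simp only [hrow, dotProduct, sq]
    _ = w ⬝ᵥ ((Aᵀ * A) *ᵥ w) := by
      rw [← mulVec_mulVec, dotProduct_mulVec _ Aᵀ, vecMul_transpose, dotProduct_comm]
    _ = w j := hquad
  have hwj : w j ^ 2 ≤ w ⬝ᵥ w := by
    rw [dotProduct, sq]
    exact Finset.single_le_sum (f := fun k => w k * w k) (fun k _ => mul_self_nonneg _)
      (Finset.mem_univ j)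
  have hnonneg : 0 ≤ w j := hsum ▸ Finset.sum_nonneg fun i _ => sq_nonneg _
  rw [hsum, ← one_div, le_div_iff₀ hβ]
  nlinarith [hquad ▸ hH.mul_dotProduct_le hev w, mul_le_mul_of_nonneg_left hwj hβ.le]

end LeastSquares

section Trajectories

open Real Set

theorem dist_le_of_hasDerivAt_of_lipschitzWith {E : Type*} [NormedAddCommGroup E]
    [NormedSpace ℝ E] {f g : E → E} {L : ℝ} (hL : 0 < L) (hg : LipschitzWith L.toNNReal g)
    {η : ℝ} (hfg : ∀ z, dist (f z) (g z) ≤ η) {x y : ℝ → E} {T : ℝ} (hT : 0 ≤ T)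
    (hx : ∀ t ∈ Icc 0 T, HasDerivAt x (f (x t)) t)
    (hy : ∀ t ∈ Icc 0 T, HasDerivAt y (g (y t)) t) (h0 : x 0 = y 0) :
    dist (x T) (y T) ≤ η / L * (exp (L * T) - 1) := by
  have h := dist_le_of_approx_trajectories_ODE (v := fun _ => g) (fun _ => hg)
    (fun t ht => (hx t ht).continuousAt.continuousWithinAt)
    (fun t ht => (hx t (Ico_subset_Icc_self ht)).hasDerivWithinAt) (fun t _ => hfg (x t))
    (fun t ht => (hy t ht).continuousAt.continuousWithinAt)
    (fun t ht => (hy t (Ico_subset_Icc_self ht)).hasDerivWithinAt)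
    (fun t _ => (dist_self _).le) (dist_le_zero.2 h0) T ⟨hT, le_rfl⟩
  rw [Real.coe_toNNReal L hL.le, gronwallBound_of_K_ne_0 hL.ne'] at h
  simpa only [sub_zero, zero_mul, zero_add, add_zero] using h

theorem norm_sub_le_of_sindy_trajectories {d p : ℕ}
    {Θ : EuclideanSpace ℝ (Fin d) → Matrix (Fin d) (Fin p) ℝ} {K : ℝ}
    (hK : ∀ z v, ‖toEuclideanLin (Θ z) v‖ ≤ K * ‖v‖) {L : ℝ} (hL : 0 < L)
    {ξ₁ ξ₂ : EuclideanSpace ℝ (Fin p)}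
    (hlip : LipschitzWith L.toNNReal fun z => toEuclideanLin (Θ z) ξ₂)
    {x y : ℝ → EuclideanSpace ℝ (Fin d)} {T : ℝ} (hT : 0 ≤ T)
    (hx : ∀ t ∈ Icc 0 T, HasDerivAt x (toEuclideanLin (Θ (x t)) ξ₁) t)
    (hy : ∀ t ∈ Icc 0 T, HasDerivAt y (toEuclideanLin (Θ (y t)) ξ₂) t) (h0 : x 0 = y 0) :
    ‖x T - y T‖ ≤ K * ‖ξ₁ - ξ₂‖ / L * (exp (L * T) - 1) := by
  rw [← dist_eq_norm]
  refine dist_le_of_hasDerivAt_of_lipschitzWith (f := fun z => toEuclideanLin (Θ z) ξ₁) hL hlip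
    (fun z => ?_) hT hx hy h0
  rw [dist_eq_norm, ← map_sub]
  exact hK z _

end Trajectories

section Concentration

open Real Set
open scoped ENNReal

variable {Ω : Type*} [MeasurableSpace Ω] {μ : Measure Ω}

theorem hasSubgaussianMGF_of_map_eq_gaussianReal [IsProbabilityMeasure μ] {X : Ω → ℝ}
    {v : ℝ≥0} (h : μ.map X = gaussianReal 0 v) : HasSubgaussianMGF X v μ where
  integrable_exp_mul t := by
    rw [← mgf_pos_iff, mgf_gaussianReal h]
    exact exp_pos _
  mgf_le t := by rw [mgf_gaussianReal h, zero_mul, zero_add]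

namespace ProbabilityTheory.HasSubgaussianMGF

theorem mono {X : Ω → ℝ} {c c' : ℝ≥0} (h : HasSubgaussianMGF X c μ) (hc : c ≤ c') :
    HasSubgaussianMGF X c' μ where
  integrable_exp_mul := h.integrable_exp_mul
  mgf_le t := (h.mgf_le t).trans (exp_le_exp.2 (by gcongr))

theorem sum_mul_of_iIndepFun {ι : Type*} [Fintype ι] {X : ι → Ω → ℝ}
    (hindep : iIndepFun X μ) {c : ℝ≥0} (hX : ∀ i, HasSubgaussianMGF (X i) c μ) (m : ι → ℝ)
    {c' : ℝ≥0} (hc' : (∑ i, m i ^ 2) * c ≤ c') :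
    HasSubgaussianMGF (fun ω => ∑ i, m i * X i ω) c' μ := by
  refine (sum_of_iIndepFun (hindep.comp (fun i x => m i * x) fun i => by fun_prop)
    (s := Finset.univ) fun i _ => (hX i).const_mul (m i)).mono ?_
  rw [← NNReal.coe_le_coe, NNReal.coe_sum]
  exact (Finset.sum_mul _ _ _).symm.trans_le hc'

theorem measure_sq_ge_le [IsFiniteMeasure μ] {X : Ω → ℝ} {c : ℝ≥0}
    (h : HasSubgaussianMGF X c μ) {u : ℝ} (hu : 0 ≤ u) :
    μ {ω | u ≤ X ω ^ 2} ≤ 2 * ENNReal.ofReal (exp (-u / (2 * c))) := by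
  have hsq : {ω | u ≤ X ω ^ 2} ⊆ {ω | √u ≤ X ω} ∪ {ω | √u ≤ (-X) ω} := fun ω hω => by
    have : √u ≤ |X ω| := (Real.sqrt_le_sqrt hω).trans_eq (Real.sqrt_sq_eq_abs _)
    rcases abs_cases (X ω) with ⟨he, _⟩ | ⟨he, _⟩
    · exact Or.inl (by simpa [he] using this)
    · exact Or.inr (by simpa [he] using this)
  have htail : ∀ Y : Ω → ℝ, HasSubgaussianMGF Y c μ →
      μ {ω | √u ≤ Y ω} ≤ ENNReal.ofReal (exp (-u / (2 * c))) := fun Y hY => by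
    rw [← ofReal_measureReal]
    exact ENNReal.ofReal_le_ofReal
      (by simpa [Real.sq_sqrt hu] using hY.measure_ge_le (sqrt_nonneg u))
  calc μ {ω | u ≤ X ω ^ 2} ≤ μ {ω | √u ≤ X ω} + μ {ω | √u ≤ (-X) ω} :=
        (measure_mono hsq).trans (measure_union_le _ _)
    _ ≤ _ := by rw [two_mul]; exact add_le_add (htail X h) (htail _ h.neg)

end ProbabilityTheory.HasSubgaussianMGF

theorem integral_mul_exp_mul (r y : ℝ) :
    ∫ t in (0 : ℝ)..y, r * exp (r * t) = exp (r * y) - 1 := by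
  have hderiv : ∀ t ∈ uIcc 0 y, HasDerivAt (fun z => exp (r * z)) (r * exp (r * t)) t :=
    fun t _ => by simpa [mul_comm] using ((hasDerivAt_id t).const_mul r).exp
  rw [intervalIntegral.integral_eq_sub_of_hasDerivAt hderiv
    ((by fun_prop : Continuous fun t => r * exp (r * t)).intervalIntegrable _ _),
    mul_zero, exp_zero]

/-- Layer-cake formula: `𝔼 exp(r f) = 1 + ∫₀^∞ ℙ(f ≥ u) r e^{ru} du`, and with `r = 1/(4V)` the
tail bound turns the integrand into `2 r e^{-ru}`. -/
theorem lintegral_exp_mul_le_three_of_tail [IsProbabilityMeasure μ] {f : Ω → ℝ}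
    (hf : AEMeasurable f μ) (hf0 : ∀ ω, 0 ≤ f ω) {V : ℝ} (hV : 0 < V)
    (htail : ∀ u, 0 < u → μ {ω | u ≤ f ω} ≤ 2 * ENNReal.ofReal (exp (-u / (2 * V)))) :
    ∫⁻ ω, ENNReal.ofReal (exp ((4 * V)⁻¹ * f ω)) ∂μ ≤ 3 := by
  set r := (4 * V)⁻¹
  have hr : 0 < r := by positivity
  have hlayer := lintegral_comp_eq_lintegral_meas_le_mul μ (ae_of_all _ hf0) hf
    (g := fun t => r * exp (r * t)) (fun t _ => (by fun_prop : Continuous _).intervalIntegrable _ _)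
    (ae_of_all _ fun t => by positivity)
  simp only [integral_mul_exp_mul] at hlayer
  have hpt : ∀ u ∈ Ioi (0 : ℝ), μ {ω | u ≤ f ω} * ENNReal.ofReal (r * exp (r * u))
      ≤ 2 * ENNReal.ofReal (r * exp (-r * u)) := fun u hu => calc
    _ ≤ 2 * ENNReal.ofReal (exp (-u / (2 * V))) * ENNReal.ofReal (r * exp (r * u)) := by
      gcongr; exact htail u hu
    _ = 2 * ENNReal.ofReal (r * exp (-r * u)) := by
      rw [mul_assoc, ← ENNReal.ofReal_mul (exp_nonneg _), mul_left_comm, ← exp_add]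
      congr 4
      simp only [r]
      field_simp
      ring
  have hint : ∫⁻ u in Ioi (0 : ℝ), ENNReal.ofReal (r * exp (-r * u)) = 1 := by
    rw [← ofReal_integral_eq_lintegral_ofReal ((exp_neg_integrableOn_Ioi 0 hr).const_mul r)
      (ae_of_all _ fun u => by positivity), integral_const_mul, integral_exp_mul_Ioi (by linarith)]
    simp [hr.ne']
  calc ∫⁻ ω, ENNReal.ofReal (exp (r * f ω)) ∂μ
      = ∫⁻ ω, 1 + ENNReal.ofReal (exp (r * f ω) - 1) ∂μ := lintegral_congr fun ω => by
        rw [← ENNReal.ofReal_one, ← ENNReal.ofReal_add zero_le_one, add_sub_cancel]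
        simpa using one_le_exp (mul_nonneg hr.le (hf0 ω))
    _ = 1 + ∫⁻ u in Ioi 0, μ {ω | u ≤ f ω} * ENNReal.ofReal (r * exp (r * u)) := by
        rw [lintegral_add_left measurable_const, hlayer, lintegral_one, measure_univ]
    _ ≤ 1 + ∫⁻ u in Ioi (0 : ℝ), 2 * ENNReal.ofReal (r * exp (-r * u)) := by
        gcongr 1 + ?_
        exact setLIntegral_mono (by fun_prop) hpt
    _ = 3 := by rw [lintegral_const_mul' _ _ (by norm_num), hint]; norm_num

theorem ProbabilityTheory.HasSubgaussianMGF.lintegral_exp_sq_le_three [IsProbabilityMeasure μ]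
    {X : Ω → ℝ} {c : ℝ≥0} (h : HasSubgaussianMGF X c μ) (hc : 0 < c) :
    ∫⁻ ω, ENNReal.ofReal (exp ((4 * c)⁻¹ * X ω ^ 2)) ∂μ ≤ 3 :=
  lintegral_exp_mul_le_three_of_tail (h.aemeasurable.pow_const 2) (fun ω => sq_nonneg _)
    (by exact_mod_cast hc) fun _ hu => h.measure_sq_ge_le hu.le

theorem exp_div_card_mul_sum_sq_le {ι : Type*} [Fintype ι] [Nonempty ι] (x : ι → ℝ) (r : ℝ) :
    exp (r / Fintype.card ι * ∑ j, x j ^ 2)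
      ≤ ∑ j, (Fintype.card ι : ℝ)⁻¹ * exp (r * x j ^ 2) := by
  have hp : (0 : ℝ) < Fintype.card ι := by exact_mod_cast Fintype.card_pos
  have hw : ∑ _j : ι, (Fintype.card ι : ℝ)⁻¹ = 1 := by
    rw [Finset.sum_const, Finset.card_univ, nsmul_eq_mul, mul_inv_cancel₀ hp.ne']
  have := convexOn_exp.map_sum_le (t := Finset.univ) (w := fun _ => (Fintype.card ι : ℝ)⁻¹)
    (p := fun j => r * x j ^ 2) (fun _ _ => by positivity) hw (fun _ _ => mem_univ _)
  simp only [smul_eq_mul] at this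
  refine le_of_eq_of_le ?_ this
  rw [Finset.mul_sum]
  exact congrArg exp (Finset.sum_congr rfl fun j _ => by ring)

theorem lintegral_exp_div_card_mul_sum_sq_le {ι : Type*} [Fintype ι] [Nonempty ι]
    {X : ι → Ω → ℝ} (hX : ∀ j, AEMeasurable (X j) μ) {r : ℝ}
    (hmom : ∀ j, ∫⁻ ω, ENNReal.ofReal (exp (r * X j ω ^ 2)) ∂μ ≤ 3) :
    ∫⁻ ω, ENNReal.ofReal (exp (r / Fintype.card ι * ∑ j, X j ω ^ 2)) ∂μ ≤ 3 := by
  set p := Fintype.card ι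
  have hp : (p : ℝ≥0∞) ≠ 0 := by simp [p, Fintype.card_ne_zero]
  calc ∫⁻ ω, ENNReal.ofReal (exp (r / p * ∑ j, X j ω ^ 2)) ∂μ
      ≤ ∫⁻ ω, ∑ j, (p : ℝ≥0∞)⁻¹ * ENNReal.ofReal (exp (r * X j ω ^ 2)) ∂μ := by
        refine lintegral_mono fun ω =>
          (ENNReal.ofReal_le_ofReal (exp_div_card_mul_sum_sq_le _ r)).trans ?_
        rw [ENNReal.ofReal_sum_of_nonneg fun j _ => by positivity]
        gcongr with j
        rw [ENNReal.ofReal_mul (by positivity), ENNReal.ofReal_inv_of_pos (by positivity),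
          ENNReal.ofReal_natCast]
    _ = ∑ j, (p : ℝ≥0∞)⁻¹ * ∫⁻ ω, ENNReal.ofReal (exp (r * X j ω ^ 2)) ∂μ := by
        rw [lintegral_finsetSum' _ fun j _ => by fun_prop]
        simp_rw [lintegral_const_mul' _ _ (ENNReal.inv_ne_top.2 hp)]
    _ ≤ ∑ _j : ι, (p : ℝ≥0∞)⁻¹ * 3 := by gcongr with j; exact hmom j
    _ = 3 := by
        rw [Finset.sum_const, Finset.card_univ, nsmul_eq_mul, ← mul_assoc,
          ENNReal.mul_inv_cancel hp (ENNReal.natCast_ne_top p), one_mul]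

theorem measure_sum_sq_ge_le {ι : Type*} [Fintype ι] [Nonempty ι] {X : ι → Ω → ℝ}
    (hX : ∀ j, AEMeasurable (X j) μ) {r : ℝ} (hr : 0 ≤ r)
    (hmom : ∀ j, ∫⁻ ω, ENNReal.ofReal (exp (r * X j ω ^ 2)) ∂μ ≤ 3) (a : ℝ) :
    μ {ω | a ≤ ∑ j, X j ω ^ 2} ≤ 3 * ENNReal.ofReal (exp (-(r / Fintype.card ι * a))) := by
  set lam := r / Fintype.card ι
  have hlam : 0 ≤ lam := by positivity
  calc μ {ω | a ≤ ∑ j, X j ω ^ 2}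
      ≤ μ {ω | ENNReal.ofReal (exp (lam * a)) ≤
          ENNReal.ofReal (exp (lam * ∑ j, X j ω ^ 2))} :=
        measure_mono fun ω hω => ENNReal.ofReal_le_ofReal (exp_le_exp.2 (by gcongr; exact hω))
    _ ≤ (∫⁻ ω, ENNReal.ofReal (exp (lam * ∑ j, X j ω ^ 2)) ∂μ) /
          ENNReal.ofReal (exp (lam * a)) :=
        meas_ge_le_lintegral_div (by fun_prop) (by simp [exp_pos]) ENNReal.ofReal_ne_top
    _ ≤ 3 / ENNReal.ofReal (exp (lam * a)) := by
        gcongr; exact lintegral_exp_div_card_mul_sum_sq_le hX hmom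
    _ = 3 * ENNReal.ofReal (exp (-(lam * a))) := by
        rw [div_eq_mul_inv, exp_neg, ENNReal.ofReal_inv_of_pos (exp_pos _)]

theorem measure_sum_sq_sum_mul_ge_le [IsProbabilityMeasure μ] {ι κ : Type*} [Fintype ι]
    [Nonempty ι] [Fintype κ] {ε : κ → Ω → ℝ} (hindep : iIndepFun ε μ) {v : ℝ≥0}
    (hε : ∀ i, HasSubgaussianMGF (ε i) v μ) (M : Matrix ι κ ℝ) {V : ℝ} (hV : 0 < V)
    (hrow : ∀ j, (∑ i, M j i ^ 2) * v ≤ V) {δ : ℝ} (hδ : δ ∈ Ioc 0 (1 / 2)) :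
    μ {ω | 16 * V * (Fintype.card ι * log (1 / δ)) ≤ ∑ j, (∑ i, M j i * ε i ω) ^ 2}
      ≤ ENNReal.ofReal δ := by
  obtain ⟨hδ0, hδ2⟩ := hδ
  have hX : ∀ j, HasSubgaussianMGF (fun ω => ∑ i, M j i * ε i ω) V.toNNReal μ := fun j =>
    HasSubgaussianMGF.sum_mul_of_iIndepFun hindep hε (M j) (by simpa [hV.le] using hrow j)
  have hmom : ∀ j, ∫⁻ ω, ENNReal.ofReal (exp ((4 * V)⁻¹ * (∑ i, M j i * ε i ω) ^ 2)) ∂μ ≤ 3 :=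
    fun j => by simpa [hV.le] using (hX j).lintegral_exp_sq_le_three (by simpa using hV)
  have hexp : exp (-((4 * V)⁻¹ / Fintype.card ι * (16 * V * (Fintype.card ι * log (1 / δ)))))
      = δ ^ 4 := by
    rw [show (4 * V)⁻¹ / Fintype.card ι * (16 * V * (Fintype.card ι * log (1 / δ)))
        = 4 * log (1 / δ) by field_simp; ring, one_div, log_inv, mul_neg, neg_neg,
      ← exp_log hδ0, ← exp_nat_mul, exp_log hδ0]
    norm_num
  refine (measure_sum_sq_ge_le (fun j => (hX j).aemeasurable) (by positivity) hmom _).trans ?_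
  rw [hexp, ← ENNReal.ofReal_ofNat 3, ← ENNReal.ofReal_mul (by norm_num)]
  refine ENNReal.ofReal_le_ofReal ?_
  nlinarith [pow_le_pow_left₀ hδ0.le hδ2 3, pow_pos hδ0 3]

theorem measure_norm_leastSquares_noise_gt_le [IsProbabilityMeasure μ] {m n : Type*}
    [Fintype m] [Fintype n] [DecidableEq n] [Nonempty n] (A : Matrix m n ℝ)
    (hH : (Aᵀ * A).IsHermitian) {β : ℝ} (hβ : 0 < β) (hev : ∀ i, β ≤ hH.eigenvalues i)
    {ε : Ω → m → ℝ} (hindep : iIndepFun (fun i ω => ε ω i) μ) {s : ℝ} (hs : 0 < s)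
    (hmap : ∀ i, μ.map (fun ω => ε ω i) = gaussianReal 0 (s ^ 2).toNNReal)
    {δ : ℝ} (hδ : δ ∈ Ioc 0 (1 / 2)) :
    μ {ω | 4 * s * √(Fintype.card n * log (1 / δ) / β)
        < ‖(EuclideanSpace.equiv n ℝ).symm (((Aᵀ * A)⁻¹ * Aᵀ) *ᵥ ε ω)‖} ≤ ENNReal.ofReal δ := by
  have hrow : ∀ j, (∑ i, ((Aᵀ * A)⁻¹ * Aᵀ) j i ^ 2) * ((s ^ 2).toNNReal : ℝ) ≤ s ^ 2 / β :=
    fun j => by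
      rw [Real.coe_toNNReal _ (sq_nonneg s), div_eq_inv_mul]
      exact mul_le_mul_of_nonneg_right (sum_sq_leastSquares_row_le A hH hβ hev j) (sq_nonneg s)
  refine (measure_mono fun ω (hω : (_ : ℝ) < _) => ?_).trans <| measure_sum_sq_sum_mul_ge_le hindep
    (fun i => hasSubgaussianMGF_of_map_eq_gaussianReal (hmap i)) _ (by positivity) hrow hδ
  have hlog : 0 ≤ log (1 / δ) := log_nonneg (one_le_one_div hδ.1 (by linarith [hδ.2]))
  have h := pow_lt_pow_left₀ hω (by positivity) two_ne_zero
  rw [EuclideanSpace.real_norm_sq_eq, mul_pow, Real.sq_sqrt (by positivity)] at h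
  refine le_of_eq_of_le ?_ h.le
  field_simp
  ring

theorem ofReal_one_sub_le_measure [IsProbabilityMeasure μ] {s t : Set Ω} {δ : ℝ} (hδ : 0 ≤ δ)
    (ht : μ t ≤ ENNReal.ofReal δ) (hst : ∀ᵐ ω ∂μ, ω ∉ t → ω ∈ s) :
    ENNReal.ofReal (1 - δ) ≤ μ s := by
  have hsc : μ sᶜ ≤ μ t := measure_mono_ae (hst.mono fun ω h hs => not_not.1 (mt h hs))
  rw [ENNReal.ofReal_sub _ hδ, ENNReal.ofReal_one, tsub_le_iff_right]
  calc 1 = μ (s ∪ sᶜ) := by rw [union_compl_self, measure_univ]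
    _ ≤ μ s + μ sᶜ := measure_union_le _ _
    _ ≤ μ s + ENNReal.ofReal δ := by gcongr; exact hsc.trans ht

end Concentration

namespace S7

theorem stmt_7 :
    ∃ C : ℝ, 0 < C ∧
      ∀ (d n p : ℕ), 1 ≤ n → 1 ≤ p →
      ∀ (Θ : EuclideanSpace ℝ (Fin d) → Matrix (Fin d) (Fin p) ℝ), Continuous Θ →
      ∀ (K : ℝ), (∀ (z : EuclideanSpace ℝ (Fin d)) (v : EuclideanSpace ℝ (Fin p)),
        ‖Matrix.toEuclideanLin (Θ z) v‖ ≤ K * ‖v‖) →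
      ∀ (A : Matrix (Fin n) (Fin p) ℝ) (hH : (Aᵀ * A).IsHermitian)
        (c : ℝ), 0 < c → (∀ i, c * n ≤ hH.eigenvalues i) →
      ∀ (Ω : Type) (_ : MeasurableSpace Ω) (μ : Measure Ω), IsProbabilityMeasure μ →
      ∀ (ε : Ω → Fin n → ℝ), (∀ i, Measurable fun ω => ε ω i) →
      ∀ (s : ℝ), 0 < s →
      iIndepFun (fun i ω => ε ω i) μ →
      (∀ i, Measure.map (fun ω => ε ω i) μ = gaussianReal 0 (Real.toNNReal (s ^ 2))) →
      ∀ (ξstar : Fin p → ℝ) (ξhat : Ω → Fin p → ℝ),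
      (∀ ω, ξhat ω = ((Aᵀ * A)⁻¹ * Aᵀ).mulVec (A.mulVec ξstar + ε ω)) →
      ∀ (L : ℝ), 0 < L → ∀ (T : ℝ), 0 ≤ T →
      ∀ (x0 : EuclideanSpace ℝ (Fin d)) (x : ℝ → EuclideanSpace ℝ (Fin d)), x 0 = x0 →
      (∀ t ∈ Set.Icc (0:ℝ) T, HasDerivAt x
        (Matrix.toEuclideanLin (Θ (x t)) ((EuclideanSpace.equiv (Fin p) ℝ).symm ξstar)) t) →
      ∀ (xhat : Ω → ℝ → EuclideanSpace ℝ (Fin d)), (∀ ω, xhat ω 0 = x0) →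
      (∀ᵐ ω ∂μ,
        (∀ t ∈ Set.Icc (0:ℝ) T, HasDerivAt (xhat ω)
          (Matrix.toEuclideanLin (Θ (xhat ω t))
            ((EuclideanSpace.equiv (Fin p) ℝ).symm (ξhat ω))) t) ∧
        LipschitzWith L.toNNReal
          (fun z => Matrix.toEuclideanLin (Θ z) ((EuclideanSpace.equiv (Fin p) ℝ).symm (ξhat ω)))) →
      ∀ δ : ℝ, δ ∈ Set.Ioc (0:ℝ) (1/2) →
      ENNReal.ofReal (1 - δ) ≤
        μ {ω | ‖x T - xhat ω T‖
          ≤ C * (K / L) * (Real.exp (L * T) - 1) * s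
            * Real.sqrt (p * Real.log (1 / δ) / (c * n))} := by
  refine ⟨4, by norm_num, ?_⟩
  intro d n p hn hp Θ _ K hK A hH c hc hev Ω _ μ _ ε _ s hs hindep hmap ξstar ξhat hξhat L hL T hT
    x0 x hx0 hx xhat hxhat0 hae δ hδ
  have : Nonempty (Fin p) := ⟨⟨0, hp⟩⟩
  have hcn : 0 < c * n := by positivity
  have hK0 : 0 ≤ K := by
    simpa using (norm_nonneg _).trans (hK 0 (EuclideanSpace.single ⟨0, hp⟩ 1))
  have hbad := measure_norm_leastSquares_noise_gt_le A hH hcn hev hindep hs hmap hδ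
  rw [Fintype.card_fin] at hbad
  refine ofReal_one_sub_le_measure hδ.1.le hbad ?_
  filter_upwards [hae] with ω ⟨hxhat, hlip⟩ hω
  set e := (EuclideanSpace.equiv (Fin p) ℝ).symm
  have hξ : ‖e ξstar - e (ξhat ω)‖ ≤ 4 * s * √(p * Real.log (1 / δ) / (c * n)) := by
    rw [norm_sub_rev, ← map_sub, hξhat ω,
      leastSquares_sub_eq (hH.isUnit_det_of_le_eigenvalues hcn hev)]
    exact not_lt.1 hω
  calc ‖x T - xhat ω T‖ ≤ K * ‖e ξstar - e (ξhat ω)‖ / L * (Real.exp (L * T) - 1) :=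
        norm_sub_le_of_sindy_trajectories hK hL hlip hT hx hxhat (hx0.trans (hxhat0 ω).symm)
    _ ≤ K * (4 * s * √(p * Real.log (1 / δ) / (c * n))) / L * (Real.exp (L * T) - 1) := by
        gcongr
        linarith [Real.add_one_le_exp (L * T), mul_nonneg hL.le hT]
    _ = _ := by ring

end S7
end

section
/- (Contraction principle for empirical Rademacher complexity.) Let x₁,…,xₙ be points of a set X, let F be a nonempty, uniformly bounded class of functions X → ℝ, and let φ : ℝ → ℝ be Lipschitz with constant α ≥ 0 and φ(0) = 0. Then the empirical Rademacher complexity of the class φ∘F = {φ∘f : f ∈ F} satisfies R̂ₙ(φ∘F) ≤ α · R̂ₙ(F). -/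
open MeasureTheory Matrix ProbabilityTheory NNReal

namespace S9

/-- Empirical Rademacher complexity of a class `F` of real-valued functions with respect to
the sample `x 0, …, x (n-1)`:
`R̂ₙ(F) = 2⁻ⁿ Σ_{σ ∈ {−1,1}ⁿ} sup_{f ∈ F} (1/n) Σᵢ σᵢ f(xᵢ)`. -/
noncomputable def empRad {X : Type*} (n : ℕ) (x : Fin n → X) (F : Set (X → ℝ)) : ℝ :=
  (2 ^ n : ℝ)⁻¹ * ∑ σ : Fin n → Bool,
    sSup ((fun f => (1 / (n : ℝ)) * ∑ i, (if σ i then (1 : ℝ) else -1) * f (x i)) '' F)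

section Aux

variable {γ : Type*}

lemma bddAbove_img (G : Set γ) (T : γ → ℝ) (C : ℝ) (h : ∀ f ∈ G, T f ≤ C) :
    BddAbove (T '' G) := ⟨C, by rintro y ⟨f, hf, rfl⟩; exact h f hf⟩

lemma sgn_abs (b : Bool) : |(if b then (1:ℝ) else -1)| = 1 := by cases b <;> norm_num

lemma sum_bound {n : ℕ} (c : Fin n → ℝ) (D : ℝ) (h : ∀ i, |c i| ≤ D) (σ : Fin n → Bool) :
    |∑ i, (if σ i then (1:ℝ) else -1) * c i| ≤ n * D := by
  calc |∑ i, (if σ i then (1:ℝ) else -1) * c i|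
      ≤ ∑ i, |(if σ i then (1:ℝ) else -1) * c i| := Finset.abs_sum_le_sum_abs _ _
    _ ≤ ∑ _i : Fin n, D := by
        refine Finset.sum_le_sum fun i _ => ?_
        rw [abs_mul, sgn_abs, one_mul]; exact h i
    _ = n * D := by simp [Finset.sum_const, Finset.card_univ, nsmul_eq_mul]

lemma sSup_mul_img (G : Set γ) (hne : G.Nonempty) (T : γ → ℝ) (C : ℝ)
    (hbd : ∀ f ∈ G, |T f| ≤ C) (c : ℝ) (hc : 0 ≤ c) :
    sSup ((fun f => c * T f) '' G) = c * sSup (T '' G) := by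
  rcases eq_or_lt_of_le hc with h | _h
  · simp only [← h, zero_mul]
    rw [show (fun _ : γ => (0:ℝ)) '' G = {0} from hne.image_const 0, csSup_singleton]
  · have hbdd : BddAbove (T '' G) :=
      bddAbove_img G T C fun f hf => (abs_le.1 (hbd f hf)).2
    have himg : sSup ((fun f => c * T f) '' G) = sSup ((fun t => c * t) '' (T '' G)) := by
      rw [Set.image_image]
    rw [himg]
    exact (Monotone.map_csSup_of_continuousAt
      ((continuous_const.mul continuous_id).continuousAt)
      (fun a b hab => mul_le_mul_of_nonneg_left hab hc) (hne.image T) hbdd).symm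

lemma key {G : Set γ} (hne : G.Nonempty) {α : ℝ} (hα : 0 ≤ α) {φ : ℝ → ℝ}
    (hLip : ∀ s t, |φ s - φ t| ≤ α * |s - t|)
    (u w : γ → ℝ) {Cu Cw : ℝ} (hu : ∀ f ∈ G, |u f| ≤ Cu) (hw : ∀ f ∈ G, |w f| ≤ Cw) :
    sSup ((fun f => u f + φ (w f)) '' G) + sSup ((fun f => u f - φ (w f)) '' G)
      ≤ sSup ((fun f => u f + α * w f) '' G) + sSup ((fun f => u f - α * w f) '' G) := by
  have hb1 : BddAbove ((fun f => u f + α * w f) '' G) :=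
    bddAbove_img _ _ (Cu + α * Cw) fun f hf => by
      have h1 := (abs_le.1 (hu f hf)).2
      have h2 := (abs_le.1 (hw f hf)).2
      nlinarith
  have hb2 : BddAbove ((fun f => u f - α * w f) '' G) :=
    bddAbove_img _ _ (Cu + α * Cw) fun f hf => by
      have h1 := (abs_le.1 (hu f hf)).2
      have h2 := (abs_le.1 (hw f hf)).1
      nlinarith
  set R := sSup ((fun f => u f + α * w f) '' G) + sSup ((fun f => u f - α * w f) '' G) with hR
  have main : ∀ f ∈ G, ∀ g ∈ G, (u f + φ (w f)) + (u g - φ (w g)) ≤ R := by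
    intro f hf g hg
    have hd := (abs_le.1 (hLip (w f) (w g))).2
    rcases le_total (w g) (w f) with hc | hc
    · have habs : |w f - w g| = w f - w g := abs_of_nonneg (by linarith)
      have e1 : u f + α * w f ≤ sSup ((fun f => u f + α * w f) '' G) :=
        le_csSup hb1 ⟨f, hf, rfl⟩
      have e2 : u g - α * w g ≤ sSup ((fun f => u f - α * w f) '' G) :=
        le_csSup hb2 ⟨g, hg, rfl⟩
      rw [habs] at hd
      rw [hR]; nlinarith
    · have habs : |w f - w g| = -(w f - w g) := abs_of_nonpos (by linarith)
      have e1 : u g + α * w g ≤ sSup ((fun f => u f + α * w f) '' G) :=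
        le_csSup hb1 ⟨g, hg, rfl⟩
      have e2 : u f - α * w f ≤ sSup ((fun f => u f - α * w f) '' G) :=
        le_csSup hb2 ⟨f, hf, rfl⟩
      rw [habs] at hd
      rw [hR]; nlinarith
  have h1 : sSup ((fun f => u f + φ (w f)) '' G)
      ≤ R - sSup ((fun f => u f - φ (w f)) '' G) := by
    refine csSup_le (hne.image _) ?_
    rintro _ ⟨f, hf, rfl⟩
    dsimp only
    rw [le_sub_comm]
    refine csSup_le (hne.image _) ?_
    rintro _ ⟨g, hg, rfl⟩
    dsimp only
    have := main f hf g hg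
    linarith
  linarith

lemma contractionSum {G : Set γ} (hne : G.Nonempty) {α : ℝ} (hα : 0 ≤ α) {φ : ℝ → ℝ}
    (hLip : ∀ s t, |φ s - φ t| ≤ α * |s - t|) (hφ0 : φ 0 = 0) :
    ∀ (n : ℕ) (a : γ → ℝ) (v : Fin n → γ → ℝ) (C : ℝ),
      (∀ f ∈ G, |a f| ≤ C) → (∀ f ∈ G, ∀ i, |v i f| ≤ C) →
      ∑ σ : Fin n → Bool,
          sSup ((fun f => a f + ∑ i, (if σ i then (1:ℝ) else -1) * φ (v i f)) '' G)
        ≤ ∑ σ : Fin n → Bool,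
          sSup ((fun f => a f + ∑ i, (if σ i then (1:ℝ) else -1) * (α * v i f)) '' G) := by
  intro n
  induction n with
  | zero => intro a v C ha hv; simp
  | succ n ih =>
    intro a v C ha hv
    have hφabs : ∀ t, |φ t| ≤ α * |t| := fun t => by simpa [hφ0] using hLip t 0
    have hC0 : 0 ≤ C := by
      obtain ⟨f₀, hf₀⟩ := hne; exact le_trans (abs_nonneg _) (ha f₀ hf₀)
    have hsum : ∀ ψ : ℝ → ℝ,
        ∑ σ : Fin (n+1) → Bool,
            sSup ((fun f => a f + ∑ i, (if σ i then (1:ℝ) else -1) * ψ (v i f)) '' G)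
          = ∑ τ : Fin n → Bool, ∑ b : Bool,
            sSup ((fun f => (a f + ∑ i : Fin n, (if τ i then (1:ℝ) else -1) * ψ (v i.succ f))
              + (if b then (1:ℝ) else -1) * ψ (v 0 f)) '' G) := by
      intro ψ
      rw [← Equiv.sum_comp (Fin.consEquiv (fun _ : Fin (n+1) => Bool))
        (fun σ : Fin (n+1) → Bool =>
          sSup ((fun f => a f + ∑ i, (if σ i then (1:ℝ) else -1) * ψ (v i f)) '' G)),
        Fintype.sum_prod_type, Finset.sum_comm]
      refine Finset.sum_congr rfl fun τ _ => Finset.sum_congr rfl fun b _ => ?_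
      refine congrArg sSup (congrArg (· '' G) (funext fun f => ?_))
      simp only [Fin.consEquiv_apply, Fin.sum_univ_succ, Fin.cons_zero, Fin.cons_succ]
      ring
    rw [hsum φ, hsum (fun t => α * t)]
    have huB : ∀ (τ : Fin n → Bool), ∀ f ∈ G,
        |a f + ∑ i : Fin n, (if τ i then (1:ℝ) else -1) * φ (v i.succ f)|
          ≤ C + n * (α * C) := by
      intro τ f hf
      calc |a f + ∑ i : Fin n, (if τ i then (1:ℝ) else -1) * φ (v i.succ f)|
          ≤ |a f| + |∑ i : Fin n, (if τ i then (1:ℝ) else -1) * φ (v i.succ f)| :=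
            abs_add_le _ _
        _ ≤ C + n * (α * C) := by
            refine add_le_add (ha f hf) (sum_bound _ _ (fun i => ?_) τ)
            exact le_trans (hφabs _)
              (mul_le_mul_of_nonneg_left (hv f hf i.succ) hα)
    calc ∑ τ : Fin n → Bool, ∑ b : Bool,
            sSup ((fun f => (a f + ∑ i : Fin n, (if τ i then (1:ℝ) else -1) * φ (v i.succ f))
              + (if b then (1:ℝ) else -1) * φ (v 0 f)) '' G)
        ≤ ∑ τ : Fin n → Bool, ∑ b : Bool,
            sSup ((fun f => (a f + ∑ i : Fin n, (if τ i then (1:ℝ) else -1) * φ (v i.succ f))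
              + (if b then (1:ℝ) else -1) * (α * v 0 f)) '' G) := by
          refine Finset.sum_le_sum fun τ _ => ?_
          rw [Fintype.sum_bool, Fintype.sum_bool]
          simp only [eq_self_iff_true, if_true, Bool.false_eq_true, if_false, one_mul, neg_one_mul,
            ← sub_eq_add_neg]
          exact key hne hα hLip _ _ (huB τ) (fun f hf => hv f hf 0)
      _ ≤ ∑ τ : Fin n → Bool, ∑ b : Bool,
            sSup ((fun f => (a f + ∑ i : Fin n, (if τ i then (1:ℝ) else -1) * (α * v i.succ f))
              + (if b then (1:ℝ) else -1) * (α * v 0 f)) '' G) := by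
          rw [Finset.sum_comm, Finset.sum_comm
            (t := (Finset.univ : Finset Bool))]
          refine Finset.sum_le_sum fun b _ => ?_
          have ha' : ∀ f ∈ G, |a f + (if b then (1:ℝ) else -1) * (α * v 0 f)| ≤ C + α * C := by
            intro f hf
            refine le_trans (abs_add_le _ _) (add_le_add (ha f hf) ?_)
            rw [abs_mul, sgn_abs, one_mul, abs_mul, abs_of_nonneg hα]
            exact mul_le_mul_of_nonneg_left (hv f hf 0) hα
          have hv' : ∀ f ∈ G, ∀ i : Fin n, |v i.succ f| ≤ C + α * C := by
            intro f hf i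
            have : 0 ≤ α * C := mul_nonneg hα hC0
            linarith [hv f hf i.succ]
          have hih := ih (fun f => a f + (if b then (1:ℝ) else -1) * (α * v 0 f))
            (fun i => v i.succ) (C + α * C) ha' hv'
          calc ∑ τ : Fin n → Bool,
              sSup ((fun f => (a f + ∑ i : Fin n, (if τ i then (1:ℝ) else -1) * φ (v i.succ f))
                + (if b then (1:ℝ) else -1) * (α * v 0 f)) '' G)
              = ∑ τ : Fin n → Bool,
              sSup ((fun f => (a f + (if b then (1:ℝ) else -1) * (α * v 0 f))
                + ∑ i : Fin n, (if τ i then (1:ℝ) else -1) * φ (v i.succ f)) '' G) := by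
                refine Finset.sum_congr rfl fun τ _ => ?_
                exact congrArg sSup (congrArg (· '' G) (funext fun f => by ring))
            _ ≤ ∑ τ : Fin n → Bool,
              sSup ((fun f => (a f + (if b then (1:ℝ) else -1) * (α * v 0 f))
                + ∑ i : Fin n, (if τ i then (1:ℝ) else -1) * (α * v i.succ f)) '' G) := hih
            _ = ∑ τ : Fin n → Bool,
              sSup ((fun f => (a f + ∑ i : Fin n, (if τ i then (1:ℝ) else -1) * (α * v i.succ f))
                + (if b then (1:ℝ) else -1) * (α * v 0 f)) '' G) := by
                refine Finset.sum_congr rfl fun τ _ => ?_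
                exact congrArg sSup (congrArg (· '' G) (funext fun f => by ring))

end Aux

theorem stmt_9 {X : Type*} (n : ℕ) (x : Fin n → X) (F : Set (X → ℝ))
    (hne : F.Nonempty) (hbdd : ∃ Cb : ℝ, ∀ f ∈ F, ∀ y, |f y| ≤ Cb)
    (φ : ℝ → ℝ) (α : ℝ) (hα : 0 ≤ α) (hLip : LipschitzWith α.toNNReal φ) (hφ0 : φ 0 = 0) :
    empRad n x ((fun f => φ ∘ f) '' F) ≤ α * empRad n x F := by
  obtain ⟨Cb, hCb⟩ := hbdd
  set C : ℝ := max Cb 0 with hC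
  have hF : ∀ f ∈ F, ∀ i, |f (x i)| ≤ C :=
    fun f hf i => le_trans (hCb f hf (x i)) (le_max_left _ _)
  have hC0 : (0:ℝ) ≤ C := le_max_right _ _
  have hLip' : ∀ s t, |φ s - φ t| ≤ α * |s - t| := by
    intro s t
    have h := hLip.dist_le_mul s t
    rwa [Real.dist_eq, Real.dist_eq, Real.coe_toNNReal α hα] at h
  have hφabs : ∀ t, |φ t| ≤ α * |t| := fun t => by simpa [hφ0] using hLip' t 0
  have hninv : (0:ℝ) ≤ 1 / (n:ℝ) := by positivity
  have E1 : empRad n x ((fun f => φ ∘ f) '' F)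
      = (2 ^ n : ℝ)⁻¹ * ∑ σ : Fin n → Bool, (1 / (n:ℝ)) *
        sSup ((fun f => ∑ i, (if σ i then (1:ℝ) else -1) * φ (f (x i))) '' F) := by
    unfold empRad
    congr 1
    refine Finset.sum_congr rfl fun σ _ => ?_
    rw [Set.image_image]
    simp only [Function.comp_apply]
    exact sSup_mul_img F hne (fun f => ∑ i, (if σ i then (1:ℝ) else -1) * φ (f (x i)))
      (n * (α * C))
      (fun f hf => sum_bound _ _ (fun i =>
        le_trans (hφabs _) (mul_le_mul_of_nonneg_left (hF f hf i) hα)) σ)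
      (1 / (n:ℝ)) hninv
  have E2 : empRad n x F
      = (2 ^ n : ℝ)⁻¹ * ∑ σ : Fin n → Bool, (1 / (n:ℝ)) *
        sSup ((fun f => ∑ i, (if σ i then (1:ℝ) else -1) * f (x i)) '' F) := by
    unfold empRad
    congr 1
    refine Finset.sum_congr rfl fun σ _ => ?_
    exact sSup_mul_img F hne (fun f => ∑ i, (if σ i then (1:ℝ) else -1) * f (x i))
      (n * C) (fun f hf => sum_bound _ _ (fun i => hF f hf i) σ) (1 / (n:ℝ)) hninv
  have E3 : ∀ σ : Fin n → Bool,
      sSup ((fun f => ∑ i, (if σ i then (1:ℝ) else -1) * (α * f (x i))) '' F)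
        = α * sSup ((fun f => ∑ i, (if σ i then (1:ℝ) else -1) * f (x i)) '' F) := by
    intro σ
    have hfn : (fun f : X → ℝ => ∑ i, (if σ i then (1:ℝ) else -1) * (α * f (x i)))
        = fun f => α * ∑ i, (if σ i then (1:ℝ) else -1) * f (x i) := by
      funext f
      rw [Finset.mul_sum]
      exact Finset.sum_congr rfl fun i _ => by ring
    rw [hfn]
    exact sSup_mul_img F hne (fun f => ∑ i, (if σ i then (1:ℝ) else -1) * f (x i))
      (n * C) (fun f hf => sum_bound _ _ (fun i => hF f hf i) σ) α hα
  have key2 := contractionSum hne hα hLip' hφ0 n (fun _ => 0) (fun i f => f (x i)) C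
    (fun f hf => by simpa using hC0) (fun f hf i => hF f hf i)
  simp only [zero_add] at key2
  have key3 : ∑ σ : Fin n → Bool,
      sSup ((fun f => ∑ i, (if σ i then (1:ℝ) else -1) * φ (f (x i))) '' F)
      ≤ ∑ σ : Fin n → Bool,
      α * sSup ((fun f => ∑ i, (if σ i then (1:ℝ) else -1) * f (x i)) '' F) :=
    key2.trans_eq (Finset.sum_congr rfl fun σ _ => E3 σ)
  rw [E1, E2]
  calc (2 ^ n : ℝ)⁻¹ * ∑ σ : Fin n → Bool, (1 / (n:ℝ)) *
        sSup ((fun f => ∑ i, (if σ i then (1:ℝ) else -1) * φ (f (x i))) '' F)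
      = (2 ^ n : ℝ)⁻¹ * ((1 / (n:ℝ)) * ∑ σ : Fin n → Bool,
        sSup ((fun f => ∑ i, (if σ i then (1:ℝ) else -1) * φ (f (x i))) '' F)) := by
        rw [← Finset.mul_sum]
    _ ≤ (2 ^ n : ℝ)⁻¹ * ((1 / (n:ℝ)) * ∑ σ : Fin n → Bool,
        α * sSup ((fun f => ∑ i, (if σ i then (1:ℝ) else -1) * f (x i)) '' F)) := by
        refine mul_le_mul_of_nonneg_left (mul_le_mul_of_nonneg_left key3 hninv) ?_
        positivity
    _ = α * ((2 ^ n : ℝ)⁻¹ * ∑ σ : Fin n → Bool, (1 / (n:ℝ)) *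
        sSup ((fun f => ∑ i, (if σ i then (1:ℝ) else -1) * f (x i)) '' F)) := by
        rw [← Finset.mul_sum, ← Finset.mul_sum]
        ring

end S9
end
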